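/- The block extension functor E sends zigzag interval modules to block interval modules: for every zigzag interval ⟨b,d⟩_ZZ, there is an isomorphism E(I^{⟨b,d⟩_ZZ}) ≅ I^{⟨b,d⟩_BL} of U-indexed modules, matching open/closed endpoint types; that is, E(I^{(b,d)_ZZ}) ≅ I^{(b,d)_BL}, E(I^{[b,d)_ZZ}) ≅ I^{[b,d)_BL}, E(I^{(b,d]_ZZ}) ≅ I^{(b,d]_BL}, and E(I^{[b,d]_ZZ}) ≅ I^{[b,d]_BL}. -/

import Mathlib

open scoped DirectSum ENNReal

namespace PersStab

/-- A persistence module indexed by a preordered set `P`, with values in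
`K`-vector spaces. -/
structure PersMod (K : Type) [Field K] (P : Type) [Preorder P] where
  V : P → Type
  [acg : ∀ a, AddCommGroup (V a)]
  [mod : ∀ a, Module K (V a)]
  map : ∀ {a b : P}, a ≤ b → (V a →ₗ[K] V b)
  map_id : ∀ a : P, map (le_refl a) = LinearMap.id
  map_comp : ∀ {a b c : P} (h₁ : a ≤ b) (h₂ : b ≤ c),
    map (h₁.trans h₂) = (map h₂).comp (map h₁)

attribute [instance] PersMod.acg PersMod.mod

variable {K : Type} [Field K] {P : Type} [Preorder P]

/-- Pointwise finite dimensional. -/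
def PersMod.pfd (M : PersMod K P) : Prop := ∀ a, FiniteDimensional K (M.V a)

/-- A morphism of persistence modules (a natural transformation). -/
structure PersHom (M N : PersMod K P) where
  app : ∀ a, M.V a →ₗ[K] N.V a
  natural : ∀ {a b : P} (h : a ≤ b), (app b).comp (M.map h) = (N.map h).comp (app a)

/-- An isomorphism of persistence modules. -/
structure PersIso (M N : PersMod K P) where
  e : ∀ a, M.V a ≃ₗ[K] N.V a
  natural : ∀ {a b : P} (h : a ≤ b) (m : M.V a), e b (M.map h m) = N.map h (e a m)

/-- Convexity: the second defining property of an interval in a poset. -/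
def IsConvexIn (J : Set P) : Prop :=
  ∀ ⦃a b c : P⦄, a ∈ J → c ∈ J → a ≤ b → b ≤ c → b ∈ J

/-- Connectivity: the third defining property of an interval in a poset:
any two points are joined by a finite zigzag of comparable points inside `J`. -/
def IsConnectedIn (J : Set P) : Prop :=
  ∀ a ∈ J, ∀ c ∈ J, ∃ (n : ℕ) (f : Fin (n + 1) → P),
    f 0 = a ∧ f (Fin.last n) = c ∧ (∀ k, f k ∈ J) ∧
    ∀ k : Fin n, f k.castSucc ≤ f k.succ ∨ f k.succ ≤ f k.castSucc

/-- An interval in a poset: nonempty, convex and connected. -/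
structure IsInterval (J : Set P) : Prop where
  nonempty : J.Nonempty
  convex : IsConvexIn J
  connected : IsConnectedIn J

-- The structure map of an interval module: the identity `K → K` if the source
-- lies in the interval, and `0` otherwise.
open Classical in
noncomputable def ivMap (K : Type) [Field K] (J : Set P) (a c : P) :
    (PLift (a ∈ J) → K) →ₗ[K] (PLift (c ∈ J) → K) where
  toFun v _ := if h : a ∈ J then v ⟨h⟩ else 0
  map_add' u v := by
    funext hc
    by_cases h : a ∈ J <;> simp [h]
  map_smul' r v := by
    funext hc
    by_cases h : a ∈ J <;> simp [h]

/-- The interval module `I^J` of a convex set `J`: one-dimensional (a copy of `K`)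
at points of `J`, zero elsewhere, with identity internal maps inside `J`. -/
noncomputable def intervalModule (K : Type) [Field K] (J : Set P) (hJ : IsConvexIn J) :
    PersMod K P where
  V a := PLift (a ∈ J) → K
  map {a c} _ := ivMap K J a c
  map_id a := by
    refine LinearMap.ext fun v => funext fun hc => ?_
    obtain ⟨hc⟩ := hc
    simp only [ivMap, LinearMap.coe_mk, AddHom.coe_mk, LinearMap.id_coe, id_eq]
    rw [dif_pos hc]
  map_comp {a b c} h₁ h₂ := by
    refine LinearMap.ext fun v => funext fun hc => ?_
    simp only [ivMap, LinearMap.coe_mk, AddHom.coe_mk, LinearMap.coe_comp,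
      Function.comp_apply]
    by_cases ha : a ∈ J
    · have hb : b ∈ J := hJ ha hc.down h₁ h₂
      simp [ha, hb]
    · simp [ha]

/-- A decomposition of the persistence module `M` as a direct sum of interval
modules `I^{B i}`, `i : ι`, where all the sets `B i` satisfy the predicate `pred`.
The multiset `{B i | i : ι}` is the barcode of `M`. -/
structure DecompOver (pred : Set P → Prop) (M : PersMod K P) where
  ι : Type
  B : ι → Set P
  mem : ∀ i, pred (B i)
  equiv : ∀ a : P, M.V a ≃ₗ[K] (Π₀ i : ι, (PLift (a ∈ B i) → K))
  natural : ∀ {a c : P} (h : a ≤ c) (m : M.V a),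
    equiv c (M.map h m) =
      DFinsupp.mapRange.linearMap (fun i => ivMap K (B i) a c) (equiv a m)

/-- A matching between two multisets, presented as indexed families: a bijection
between a subset (the coimage) of the index set `ι` and a subset (the image) of
the index set `κ`. -/
structure Matching (ι κ : Type) : Type where
  R : ι → κ → Prop
  functional : ∀ {i j j'}, R i j → R i j' → j = j'
  injective : ∀ {i i' j}, R i j → R i' j → i = i'

section Shift

variable (sh : ℝ → P → P)

/-- `M` is `δ`-trivial (with respect to the shift `sh`): all internal maps
from `p` to the `δ`-shift of `p` vanish. -/
def ETrivial (M : PersMod K P) (δ : ℝ) : Prop :=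
  ∀ (p : P) (h : p ≤ sh δ p), M.map h = 0

/-- The data `(f, g)` is an `ε`-interleaving between `M` and `N`:
`f : M → N(ε)` and `g : N → M(ε)` are natural, and the two composites agree with
the `2ε`-shift morphisms of `M` and `N`. -/
structure IsInterleaving (ε : ℝ) (M N : PersMod K P)
    (f : ∀ p, M.V p →ₗ[K] N.V (sh ε p)) (g : ∀ p, N.V p →ₗ[K] M.V (sh ε p)) : Prop where
  nat_f : ∀ {p q : P} (h : p ≤ q) (h' : sh ε p ≤ sh ε q),
    (f q).comp (M.map h) = (N.map h').comp (f p)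
  nat_g : ∀ {p q : P} (h : p ≤ q) (h' : sh ε p ≤ sh ε q),
    (g q).comp (N.map h) = (M.map h').comp (g p)
  gf : ∀ (p : P) (h : p ≤ sh ε (sh ε p)), (g (sh ε p)).comp (f p) = M.map h
  fg : ∀ (p : P) (h : p ≤ sh ε (sh ε p)), (f (sh ε p)).comp (g p) = N.map h

/-- `M` and `N` are `ε`-interleaved. -/
def Interleaved (ε : ℝ) (M N : PersMod K P) : Prop :=
  0 ≤ ε ∧ ∃ f g, IsInterleaving sh ε M N f g

/-- The interleaving distance, valued in `ℝ≥0∞`. -/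
noncomputable def dI (M N : PersMod K P) : ℝ≥0∞ :=
  ⨅ ε : {e : ℝ // Interleaved sh e M N}, ENNReal.ofReal ε.1

/-- `σ` is an `ε`-matching between the barcodes `{A i}` and `{C j}`:
every interval of either barcode which is not `2ε`-trivial is matched, and
matched intervals have `ε`-interleaved interval modules. -/
def IsEpsMatching (K : Type) [Field K] (ε : ℝ) {ι κ : Type}
    (A : ι → Set P) (hA : ∀ i, IsConvexIn (A i))
    (C : κ → Set P) (hC : ∀ j, IsConvexIn (C j)) (σ : Matching ι κ) : Prop :=
  (∀ i, ¬ ETrivial sh (intervalModule K (A i) (hA i)) (2 * ε) → ∃ j, σ.R i j) ∧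
  (∀ j, ¬ ETrivial sh (intervalModule K (C j) (hC j)) (2 * ε) → ∃ i, σ.R i j) ∧
  (∀ i j, σ.R i j →
    Interleaved sh ε (intervalModule K (A i) (hA i)) (intervalModule K (C j) (hC j)))

/-- The bottleneck distance between two barcodes, valued in `ℝ≥0∞`. -/
noncomputable def dB (K : Type) [Field K] {ι κ : Type}
    (A : ι → Set P) (hA : ∀ i, IsConvexIn (A i))
    (C : κ → Set P) (hC : ∀ j, IsConvexIn (C j)) : ℝ≥0∞ :=
  ⨅ e : {e : ℝ // 0 ≤ e ∧ ∃ σ : Matching ι κ, IsEpsMatching sh K e A hA C hC σ},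
    ENNReal.ofReal e.1

end Shift

end PersStab
namespace PersStab

/-! ### The poset `ℝᵒᵖ × ℝ` and blocks -/

/-- The poset `ℝᵒᵖ × ℝ`: `(a, b) ≤ (c, d)` iff `c ≤ a` and `b ≤ d`. -/
structure RopR where
  x : ℝ
  y : ℝ

instance : Preorder RopR where
  le p q := q.x ≤ p.x ∧ p.y ≤ q.y
  le_refl p := ⟨le_rfl, le_rfl⟩
  le_trans p q r h₁ h₂ := ⟨h₂.1.trans h₁.1, h₁.2.trans h₂.2⟩

lemma RopR.le_def {p q : RopR} : p ≤ q ↔ q.x ≤ p.x ∧ p.y ≤ q.y := Iff.rfl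

/-- The `ε`-shift on the poset `ℝᵒᵖ × ℝ`: `(a, b) ↦ (a - ε, b + ε)`. -/
def shf (ε : ℝ) (p : RopR) : RopR := ⟨p.x - ε, p.y + ε⟩

/-- The block `(a,b)_BL = {(x,y) ∈ U : a < x, y < b}` (with `a`, `b` finite;
for infinite endpoints this shape is of type co, oc or c). -/
def blkO (a b : ℝ) : Set RopR := {p | p.x ≤ p.y ∧ a < p.x ∧ p.y < b}

/-- The blocks `[a,b)_BL = {(x,y) ∈ U : a ≤ y < b}` (for `s = a` finite) and
`(-∞,b)_BL = {(x,y) ∈ U : y < b}` (for `s = ⊥`). -/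
def blkCO (s : EReal) (b : ℝ) : Set RopR := {p | p.x ≤ p.y ∧ s ≤ (p.y : EReal) ∧ p.y < b}

/-- The blocks `(a,b]_BL = {(x,y) ∈ U : a < x ≤ b}` (for `t = b` finite) and
`(a,∞)_BL = {(x,y) ∈ U : a < x}` (for `t = ⊤`). -/
def blkOC (a : ℝ) (t : EReal) : Set RopR := {p | p.x ≤ p.y ∧ a < p.x ∧ (p.x : EReal) ≤ t}

/-- The closed blocks `{(x,y) ∈ U : x ≤ t, s ≤ y}`: this includes `[a,b]_BL`
(`s = a ≤ t = b` finite), `[b,a]_BL` (`t = a < s = b` finite), `[a,∞)_BL` (`t = ⊤`),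
`(-∞,b]_BL` (`s = ⊥`) and `(-∞,∞)_BL = U`. -/
def blkC (s t : EReal) : Set RopR := {p | p.x ≤ p.y ∧ (p.x : EReal) ≤ t ∧ s ≤ (p.y : EReal)}

/-- The four types of blocks. -/
inductive BlockType : Type
  | o | co | oc | c
deriving DecidableEq

/-- The blocks of each type. -/
def IsBlockOfType : BlockType → Set RopR → Prop
  | .o, J => ∃ a b : ℝ, a < b ∧ J = blkO a b
  | .co, J => ∃ (s : EReal) (b : ℝ), s ≠ ⊤ ∧ s < (b : EReal) ∧ J = blkCO s b
  | .oc, J => ∃ (a : ℝ) (t : EReal), t ≠ ⊥ ∧ (a : EReal) < t ∧ J = blkOC a t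
  | .c, J => ∃ s t : EReal, s ≠ ⊤ ∧ t ≠ ⊥ ∧ J = blkC s t

/-- A block: an interval of `U ⊆ ℝᵒᵖ × ℝ` of one of the five standard shapes. -/
def IsBlock (J : Set RopR) : Prop := ∃ τ, IsBlockOfType τ J

lemma blkO_convex (a b : ℝ) : IsConvexIn (blkO a b) := by
  rintro p q r ⟨hp1, hp2, hp3⟩ ⟨hr1, hr2, hr3⟩ ⟨hpq1, hpq2⟩ ⟨hqr1, hqr2⟩
  exact ⟨by linarith, by linarith, by linarith⟩

lemma blkCO_convex (s : EReal) (b : ℝ) : IsConvexIn (blkCO s b) := by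
  rintro p q r ⟨hp1, hp2, hp3⟩ ⟨hr1, hr2, hr3⟩ ⟨hpq1, hpq2⟩ ⟨hqr1, hqr2⟩
  refine ⟨by linarith, hp2.trans ?_, by linarith⟩
  exact_mod_cast hpq2

lemma blkOC_convex (a : ℝ) (t : EReal) : IsConvexIn (blkOC a t) := by
  rintro p q r ⟨hp1, hp2, hp3⟩ ⟨hr1, hr2, hr3⟩ ⟨hpq1, hpq2⟩ ⟨hqr1, hqr2⟩
  refine ⟨by linarith, by linarith, le_trans ?_ hp3⟩
  exact_mod_cast hpq1

lemma blkC_convex (s t : EReal) : IsConvexIn (blkC s t) := by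
  rintro p q r ⟨hp1, hp2, hp3⟩ ⟨hr1, hr2, hr3⟩ ⟨hpq1, hpq2⟩ ⟨hqr1, hqr2⟩
  refine ⟨by linarith, le_trans ?_ hp2, hp3.trans ?_⟩
  · exact_mod_cast hpq1
  · exact_mod_cast hpq2

lemma IsBlockOfType.convex {τ : BlockType} {J : Set RopR} (h : IsBlockOfType τ J) :
    IsConvexIn J := by
  cases τ with
  | o => obtain ⟨a, b, -, rfl⟩ := h; exact blkO_convex a b
  | co => obtain ⟨s, b, -, -, rfl⟩ := h; exact blkCO_convex s b
  | oc => obtain ⟨a, t, -, -, rfl⟩ := h; exact blkOC_convex a t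
  | c => obtain ⟨s, t, -, -, rfl⟩ := h; exact blkC_convex s t

lemma IsBlock.convex {J : Set RopR} (h : IsBlock J) : IsConvexIn J :=
  h.choose_spec.convex

end PersStab
namespace PersStab

/-! ### The zigzag poset `ZZ ⊆ ℤᵒᵖ × ℤ` and the poset `U ⊆ ℝᵒᵖ × ℝ` -/

/-- The zigzag poset `ZZ = {(i,j) : i ∈ ℤ, j ∈ {i, i-1}} ⊆ ℤᵒᵖ × ℤ`. -/
structure ZZpt where
  i : ℤ
  j : ℤ
  hij : j = i ∨ j = i - 1

instance : Preorder ZZpt where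
  le p q := q.i ≤ p.i ∧ p.j ≤ q.j
  le_refl p := ⟨le_rfl, le_rfl⟩
  le_trans p q r h₁ h₂ := ⟨h₂.1.trans h₁.1, h₁.2.trans h₂.2⟩

lemma ZZpt.le_def {p q : ZZpt} : p ≤ q ↔ q.i ≤ p.i ∧ p.j ≤ q.j := Iff.rfl

lemma ZZpt.j_le_i (p : ZZpt) : p.j ≤ p.i := by
  rcases p.hij with h | h <;> omega

/-- The first coordinate of a zigzag point, as an extended real. -/
def pI (p : ZZpt) : EReal := ((p.i : ℝ) : EReal)
/-- The second coordinate of a zigzag point, as an extended real. -/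
def pJ (p : ZZpt) : EReal := ((p.j : ℝ) : EReal)

lemma pJ_le_pI (p : ZZpt) : pJ p ≤ pI p := by
  unfold pI pJ
  exact_mod_cast p.j_le_i

lemma pI_mono {p q : ZZpt} (h : q.i ≤ p.i) : pI q ≤ pI p := by
  unfold pI; exact_mod_cast h

lemma pJ_mono {p q : ZZpt} (h : p.j ≤ q.j) : pJ p ≤ pJ q := by
  unfold pJ; exact_mod_cast h

/-- `(β,β) ≤ (i,j)` in the product order (with extended-real endpoints). -/
def zzLeLo (β : EReal) (p : ZZpt) : Prop := β ≤ pI p ∧ β ≤ pJ p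
/-- `(β,β) < (i,j)` in the product order. -/
def zzLtLo (β : EReal) (p : ZZpt) : Prop := zzLeLo β p ∧ ¬(pI p ≤ β ∧ pJ p ≤ β)
/-- `(i,j) ≤ (δ,δ)` in the product order. -/
def zzLeHi (p : ZZpt) (δ : EReal) : Prop := pI p ≤ δ ∧ pJ p ≤ δ
/-- `(i,j) < (δ,δ)` in the product order. -/
def zzLtHi (p : ZZpt) (δ : EReal) : Prop := zzLeHi p δ ∧ ¬(δ ≤ pI p ∧ δ ≤ pJ p)

/-- The zigzag interval `(β,δ)_ZZ`. -/
def zzO (β δ : EReal) : Set ZZpt := {p | zzLtLo β p ∧ zzLtHi p δ}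
/-- The zigzag interval `[β,δ)_ZZ`. -/
def zzCO (β δ : EReal) : Set ZZpt := {p | zzLeLo β p ∧ zzLtHi p δ}
/-- The zigzag interval `(β,δ]_ZZ`. -/
def zzOC (β δ : EReal) : Set ZZpt := {p | zzLtLo β p ∧ zzLeHi p δ}
/-- The zigzag interval `[β,δ]_ZZ`. -/
def zzCC (β δ : EReal) : Set ZZpt := {p | zzLeLo β p ∧ zzLeHi p δ}

lemma zzLeLo_iff (β : EReal) (p : ZZpt) : zzLeLo β p ↔ β ≤ pJ p :=
  ⟨fun h => h.2, fun h => ⟨h.trans (pJ_le_pI p), h⟩⟩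

lemma zzLtLo_iff (β : EReal) (p : ZZpt) : zzLtLo β p ↔ β ≤ pJ p ∧ β < pI p := by
  constructor
  · rintro ⟨⟨h1, h2⟩, h3⟩
    refine ⟨h2, not_le.mp fun h => h3 ⟨h, (pJ_le_pI p).trans h⟩⟩
  · rintro ⟨h1, h2⟩
    exact ⟨⟨h2.le, h1⟩, fun h => absurd h.1 (not_le.mpr h2)⟩

lemma zzLeHi_iff (p : ZZpt) (δ : EReal) : zzLeHi p δ ↔ pI p ≤ δ :=
  ⟨fun h => h.1, fun h => ⟨h, (pJ_le_pI p).trans h⟩⟩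

lemma zzLtHi_iff (p : ZZpt) (δ : EReal) : zzLtHi p δ ↔ pI p ≤ δ ∧ pJ p < δ := by
  constructor
  · rintro ⟨⟨h1, h2⟩, h3⟩
    refine ⟨h1, not_le.mp fun h => h3 ⟨(h.trans (pJ_le_pI p) : δ ≤ pI p), h⟩⟩
  · rintro ⟨h1, h2⟩
    exact ⟨⟨h1, h2.le⟩, fun h => absurd h.2 (not_le.mpr h2)⟩

lemma zzO_convex (β δ : EReal) : IsConvexIn (zzO β δ) := by
  rintro p q r ⟨hp1, hp2⟩ ⟨hr1, hr2⟩ hpq hqr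
  rw [zzLtLo_iff] at hp1 hr1
  rw [zzLtHi_iff] at hp2 hr2
  exact ⟨(zzLtLo_iff β q).2 ⟨hp1.1.trans (pJ_mono hpq.2),
      lt_of_lt_of_le hr1.2 (pI_mono hqr.1)⟩,
    (zzLtHi_iff q δ).2 ⟨(pI_mono hpq.1).trans hp2.1,
      lt_of_le_of_lt (pJ_mono hqr.2) hr2.2⟩⟩

lemma zzCO_convex (β δ : EReal) : IsConvexIn (zzCO β δ) := by
  rintro p q r ⟨hp1, hp2⟩ ⟨hr1, hr2⟩ hpq hqr
  rw [zzLeLo_iff] at hp1 hr1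
  rw [zzLtHi_iff] at hp2 hr2
  exact ⟨(zzLeLo_iff β q).2 (hp1.trans (pJ_mono hpq.2)),
    (zzLtHi_iff q δ).2 ⟨(pI_mono hpq.1).trans hp2.1,
      lt_of_le_of_lt (pJ_mono hqr.2) hr2.2⟩⟩

lemma zzOC_convex (β δ : EReal) : IsConvexIn (zzOC β δ) := by
  rintro p q r ⟨hp1, hp2⟩ ⟨hr1, hr2⟩ hpq hqr
  rw [zzLtLo_iff] at hp1 hr1
  rw [zzLeHi_iff] at hp2 hr2
  exact ⟨(zzLtLo_iff β q).2 ⟨hp1.1.trans (pJ_mono hpq.2),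
      lt_of_lt_of_le hr1.2 (pI_mono hqr.1)⟩,
    (zzLeHi_iff q δ).2 ((pI_mono hpq.1).trans hp2)⟩

lemma zzCC_convex (β δ : EReal) : IsConvexIn (zzCC β δ) := by
  rintro p q r ⟨hp1, hp2⟩ ⟨hr1, hr2⟩ hpq hqr
  rw [zzLeLo_iff] at hp1 hr1
  rw [zzLeHi_iff] at hp2 hr2
  exact ⟨(zzLeLo_iff β q).2 (hp1.trans (pJ_mono hpq.2)),
    (zzLeHi_iff q δ).2 ((pI_mono hpq.1).trans hp2)⟩

/-- The poset `U ⊆ ℝᵒᵖ × ℝ` of pairs `(x, y)` with `x ≤ y`. -/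
abbrev UPos := {p : RopR // p.x ≤ p.y}

lemma UPos.le_def {u v : UPos} : u ≤ v ↔ v.1.x ≤ u.1.x ∧ u.1.y ≤ v.1.y := Iff.rfl

/-- The block `(β,δ)_BL` of `U` (extended-real endpoints). -/
def ublkO (β δ : EReal) : Set UPos := {u | β < (u.1.x : EReal) ∧ ((u.1.y : EReal)) < δ}
/-- The block `[β,δ)_BL` of `U`. -/
def ublkCO (β δ : EReal) : Set UPos := {u | β ≤ (u.1.y : EReal) ∧ ((u.1.y : EReal)) < δ}
/-- The block `(β,δ]_BL` of `U`. -/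
def ublkOC (β δ : EReal) : Set UPos := {u | β < (u.1.x : EReal) ∧ ((u.1.x : EReal)) ≤ δ}
/-- The block `[β,δ]_BL` of `U`. -/
def ublkCC (β δ : EReal) : Set UPos := {u | ((u.1.x : EReal)) ≤ δ ∧ β ≤ (u.1.y : EReal)}

lemma coeR_mono {s t : ℝ} (h : s ≤ t) : (s : EReal) ≤ (t : EReal) := by exact_mod_cast h

lemma ublkO_convex (β δ : EReal) : IsConvexIn (ublkO β δ) := by
  rintro p q r ⟨hp1, hp2⟩ ⟨hr1, hr2⟩ hpq hqr
  exact ⟨lt_of_lt_of_le hr1 (coeR_mono hqr.1), lt_of_le_of_lt (coeR_mono hqr.2) hr2⟩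

lemma ublkCO_convex (β δ : EReal) : IsConvexIn (ublkCO β δ) := by
  rintro p q r ⟨hp1, hp2⟩ ⟨hr1, hr2⟩ hpq hqr
  exact ⟨hp1.trans (coeR_mono hpq.2), lt_of_le_of_lt (coeR_mono hqr.2) hr2⟩

lemma ublkOC_convex (β δ : EReal) : IsConvexIn (ublkOC β δ) := by
  rintro p q r ⟨hp1, hp2⟩ ⟨hr1, hr2⟩ hpq hqr
  exact ⟨lt_of_lt_of_le hr1 (coeR_mono hqr.1), (coeR_mono hpq.1).trans hp2⟩

lemma ublkCC_convex (β δ : EReal) : IsConvexIn (ublkCC β δ) := by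
  rintro p q r ⟨hp1, hp2⟩ ⟨hr1, hr2⟩ hpq hqr
  exact ⟨(coeR_mono hpq.1).trans hp1, hp2.trans (coeR_mono hpq.2)⟩

/-! ### The block extension functor `E` -/

variable {K : Type} [Field K]

attribute [local instance] Classical.decEq

/-- The set of zigzag indices lying below `u ∈ U` in `ℝᵒᵖ × ℝ`:
`{(i,j) ∈ ZZ : u.x ≤ i and j ≤ u.y}`. -/
def ZZbelow (u : UPos) : Set ZZpt := {p | u.1.x ≤ (p.i : ℝ) ∧ (p.j : ℝ) ≤ u.1.y}

lemma ZZbelow_mono {u v : UPos} (h : u ≤ v) : ZZbelow u ⊆ ZZbelow v := by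
  rintro p ⟨h1, h2⟩
  exact ⟨le_trans h.1 h1, le_trans h2 h.2⟩

/-- The submodule of relations defining the colimit of `V` over `S`. -/
noncomputable def relSub (V : PersMod K ZZpt) (S : Set ZZpt) :
    Submodule K (⨁ p : S, V.V p.1) :=
  Submodule.span K {x | ∃ (p q : ↥S) (h : p.1 ≤ q.1) (v : V.V p.1),
    x = DirectSum.lof K ↥S (fun r => V.V r.1) p v -
      DirectSum.lof K ↥S (fun r => V.V r.1) q (V.map h v)}

/-- The map between direct sums induced by an inclusion of index sets. -/
noncomputable def fwd (V : PersMod K ZZpt) {S T : Set ZZpt} (hST : S ⊆ T) :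
    (⨁ p : S, V.V p.1) →ₗ[K] (⨁ p : T, V.V p.1) :=
  DirectSum.toModule K ↥S _
    (fun p => DirectSum.lof K ↥T (fun r => V.V r.1) ⟨p.1, hST p.2⟩)

set_option maxHeartbeats 1000000 in
lemma fwd_lof (V : PersMod K ZZpt) {S T : Set ZZpt} (hST : S ⊆ T) (p : ↥S)
    (v : V.V p.1) :
    fwd V hST (DirectSum.lof K ↥S (fun r => V.V r.1) p v) =
      DirectSum.lof K ↥T (fun r => V.V r.1) ⟨p.1, hST p.2⟩ v := by
  unfold fwd
  exact DirectSum.toModule_lof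
    (φ := fun q : ↥S => DirectSum.lof K ↥T (fun r => V.V r.1) ⟨q.1, hST q.2⟩) K p v

lemma fwd_rel (V : PersMod K ZZpt) {S T : Set ZZpt} (hST : S ⊆ T) :
    relSub V S ≤ (relSub V T).comap (fwd V hST) := by
  rw [← Submodule.map_le_iff_le_comap, relSub, Submodule.map_span]
  refine Submodule.span_le.2 ?_
  rintro x ⟨y, ⟨p, q, h, v, rfl⟩, rfl⟩
  refine Submodule.subset_span ?_
  refine ⟨⟨p.1, hST p.2⟩, ⟨q.1, hST q.2⟩, h, v, ?_⟩
  rw [map_sub, fwd_lof, fwd_lof]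

/-- The block extension functor `E` on objects: `E(V)` is the `U`-indexed module
whose value at `u` is the colimit of `V` over `{(i,j) ∈ ZZ : u.x ≤ i, j ≤ u.y}`,
computed as a quotient of a direct sum. -/
noncomputable def EMod (V : PersMod K ZZpt) : PersMod K UPos where
  V u := (⨁ p : ZZbelow u, V.V p.1) ⧸ relSub V (ZZbelow u)
  map {u v} h := Submodule.mapQ _ _ (fwd V (ZZbelow_mono h)) (fwd_rel V (ZZbelow_mono h))
  map_id u := by
    refine Submodule.linearMap_qext _ ?_
    refine DirectSum.linearMap_ext _ fun p => ?_
    obtain ⟨pv, hp⟩ := p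
    refine LinearMap.ext fun v => ?_
    simp only [LinearMap.coe_comp, Function.comp_apply, Submodule.mkQ_apply,
      Submodule.mapQ_apply, LinearMap.id_coe, id_eq]
    rw [fwd_lof]
  map_comp {u v w} h₁ h₂ := by
    refine Submodule.linearMap_qext _ ?_
    refine DirectSum.linearMap_ext _ fun p => ?_
    obtain ⟨pv, hp⟩ := p
    refine LinearMap.ext fun x => ?_
    simp only [LinearMap.coe_comp, Function.comp_apply, Submodule.mkQ_apply,
      Submodule.mapQ_apply]
    rw [fwd_lof, fwd_lof, fwd_lof]

end PersStab
namespace PersStab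

/-- Endpoints in `ℤ ∪ {±∞}`, coerced into the extended reals. -/
noncomputable def ez : WithBot (WithTop ℤ) → EReal
  | none => ⊥
  | some none => ⊤
  | some (some n) => ((n : ℝ) : EReal)


/-!
The colimit of `I^J` over a down-set `S` of the fence `ZZ` is spanned by the classes of the
points of `J ∩ S`. Along an edge `p ≤ q` of `S` with `p ∈ J`, the class of `p` equals that of `q`
if `q ∈ J` and vanishes if `q ∉ J`. For a zigzag interval `J`, the set `J ∩ ZZbelow u` is a
segment of the fence, so all its points have the same class. Hence `E(I^J)_u` is `K` when
`J ∩ ZZbelow u` is nonempty and upward closed in `ZZbelow u`, and `0` otherwise. This condition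
on `u` cuts out exactly the block of the same type: it splits into one condition per endpoint,
each of which becomes integer arithmetic once `u = (x, y)` is rounded to `(⌈x⌉, ⌊y⌋)`.
-/

@[ext] lemma ZZpt.ext {p q : ZZpt} (hi : p.i = q.i) (hj : p.j = q.j) : p = q := by
  cases p; cases q; simp_all

/-- The points of the fence `ZZ`, listed along the fence by `i + j`. -/
def ZZpt.ofInt (n : ℤ) : ZZpt := ⟨(n + 1) / 2, n / 2, by omega⟩

lemma ZZpt.ofInt_i_add_j (p : ZZpt) : ZZpt.ofInt (p.i + p.j) = p := by
  have := p.hij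
  ext <;> simp only [ZZpt.ofInt] <;> omega

lemma ZZpt.ofInt_comparable_succ (n : ℤ) :
    ZZpt.ofInt n ≤ ZZpt.ofInt (n + 1) ∨ ZZpt.ofInt (n + 1) ≤ ZZpt.ofInt n := by
  simp only [ZZpt.le_def, ZZpt.ofInt]
  omega

/-- Convexity for the coordinatewise order of `ℤ × ℤ` (not the order of `ZZ`). -/
def IsBoxConvex (S : Set ZZpt) : Prop :=
  ∀ ⦃p q r : ZZpt⦄, p ∈ S → q ∈ S → p.i ≤ r.i → r.i ≤ q.i → p.j ≤ r.j → r.j ≤ q.j → r ∈ S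

lemma IsBoxConvex.inter {S T : Set ZZpt} (hS : IsBoxConvex S) (hT : IsBoxConvex T) :
    IsBoxConvex (S ∩ T) := fun _ _ _ hp hq h₁ h₂ h₃ h₄ =>
  ⟨hS hp.1 hq.1 h₁ h₂ h₃ h₄, hT hp.2 hq.2 h₁ h₂ h₃ h₄⟩

lemma IsBoxConvex.ofInt_mem {S : Set ZZpt} (hS : IsBoxConvex S) {p q : ZZpt} (hp : p ∈ S)
    (hq : q ∈ S) {n : ℤ} (hpn : p.i + p.j ≤ n) (hnq : n ≤ q.i + q.j) : ZZpt.ofInt n ∈ S := by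
  rw [← ZZpt.ofInt_i_add_j p] at hp
  rw [← ZZpt.ofInt_i_add_j q] at hq
  exact hS hp hq (by simp only [ZZpt.ofInt]; omega) (by simp only [ZZpt.ofInt]; omega)
    (by simp only [ZZpt.ofInt]; omega) (by simp only [ZZpt.ofInt]; omega)

lemma isBoxConvex_ZZbelow (u : UPos) : IsBoxConvex (ZZbelow u) := fun _ _ _ hp hq h₁ _ _ h₄ =>
  ⟨hp.1.trans (by exact_mod_cast h₁), le_trans (by exact_mod_cast h₄) hq.2⟩

lemma isLowerSet_ZZbelow (u : UPos) : IsLowerSet (ZZbelow u) := fun _ _ h hq =>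
  ⟨hq.1.trans (by exact_mod_cast h.1), le_trans (by exact_mod_cast h.2) hq.2⟩

section Colimit

attribute [local instance] Classical.decEq

variable {K : Type} [Field K] (V : PersMod K ZZpt) (u : UPos)

noncomputable def EMod.ι (p : ZZbelow u) : V.V p.1 →ₗ[K] (EMod V).V u :=
  (relSub V (ZZbelow u)).mkQ ∘ₗ DirectSum.lof K (ZZbelow u) (fun r => V.V r.1) p

lemma EMod.ι_map {p q : ZZbelow u} (h : p.1 ≤ q.1) (v : V.V p.1) :
    EMod.ι V u q (V.map h v) = EMod.ι V u p v :=
  ((Submodule.Quotient.eq _).2 (Submodule.subset_span ⟨p, q, h, v, rfl⟩ : _ ∈ relSub V _)).symm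

lemma EMod.map_ι {u w : UPos} (h : u ≤ w) (p : ZZbelow u) (v : V.V p.1) :
    (EMod V).map h (EMod.ι V u p v) = EMod.ι V w ⟨p.1, ZZbelow_mono h p.2⟩ v :=
  congrArg Submodule.Quotient.mk (fwd_lof V (ZZbelow_mono h) p v)

variable {V u} {N : Type} [AddCommGroup N] [Module K N]

lemma EMod.hom_ext {f g : (EMod V).V u →ₗ[K] N}
    (h : ∀ p, f ∘ₗ EMod.ι V u p = g ∘ₗ EMod.ι V u p) : f = g :=
  Submodule.linearMap_qext _ (DirectSum.linearMap_ext _ h)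

noncomputable def EMod.desc (f : ∀ p : ZZbelow u, V.V p.1 →ₗ[K] N)
    (hf : ∀ (p q : ZZbelow u) (h : p.1 ≤ q.1), f q ∘ₗ V.map h = f p) :
    (EMod V).V u →ₗ[K] N :=
  (relSub V (ZZbelow u)).liftQ (DirectSum.toModule K _ N f) <| Submodule.span_le.2 <| by
    rintro _ ⟨p, q, h, v, rfl⟩
    simp [← hf p q h]

lemma EMod.desc_ι (f : ∀ p : ZZbelow u, V.V p.1 →ₗ[K] N)
    (hf : ∀ (p q : ZZbelow u) (h : p.1 ≤ q.1), f q ∘ₗ V.map h = f p) (p : ZZbelow u)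
    (v : V.V p.1) : EMod.desc f hf (EMod.ι V u p v) = f p v :=
  DirectSum.toModule_lof (φ := f) K p v

end Colimit

section IntervalModule

variable {K : Type} [Field K]

open Classical in
noncomputable def pliftMap (K : Type) [Field K] (P Q : Prop) :
    (PLift P → K) →ₗ[K] (PLift Q → K) where
  toFun v _ := if h : P then v ⟨h⟩ else 0
  map_add' u v := by
    funext
    split_ifs <;> simp
  map_smul' r v := by
    funext
    split_ifs <;> simp

lemma pliftMap_apply_of {P Q : Prop} (hP : P) (v : PLift P → K) (hQ : PLift Q) :
    pliftMap K P Q v hQ = v ⟨hP⟩ := dif_pos hP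

lemma pliftMap_apply_of_not {P Q : Prop} (hP : ¬P) (v : PLift P → K) (hQ : PLift Q) :
    pliftMap K P Q v hQ = 0 := dif_neg hP

lemma intervalModule_map_apply_of {P : Type} [Preorder P] {J : Set P} (hJ : IsConvexIn J)
    {a c : P} (h : a ≤ c) (ha : a ∈ J) (v : (intervalModule K J hJ).V a) (hc : PLift (c ∈ J)) :
    (intervalModule K J hJ).map h v hc = v ⟨ha⟩ :=
  dif_pos ha

lemma intervalModule_map_apply_of_not {P : Type} [Preorder P] {J : Set P} (hJ : IsConvexIn J)
    {a c : P} (h : a ≤ c) (ha : a ∉ J) (v : (intervalModule K J hJ).V a)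
    (hc : PLift (c ∈ J)) : (intervalModule K J hJ).map h v hc = 0 :=
  dif_neg ha

variable {J : Set ZZpt} (hJ : IsConvexIn J) {u : UPos}

lemma EMod.ι_const_eq_of_le {p q : ZZbelow u} (h : p.1 ≤ q.1) (hp : p.1 ∈ J) (k : K) :
    EMod.ι (intervalModule K J hJ) u q (fun _ => k) =
      EMod.ι (intervalModule K J hJ) u p (fun _ => k) := by
  refine Eq.trans (congrArg _ ?_) (EMod.ι_map (intervalModule K J hJ) u h _)
  funext hq
  exact (intervalModule_map_apply_of hJ h hp (fun _ => k) hq).symm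

lemma EMod.ι_eq_zero_of_le_of_not_mem {p q : ZZbelow u} (h : p.1 ≤ q.1) (hq : q.1 ∉ J)
    (v : (intervalModule K J hJ).V p.1) : EMod.ι (intervalModule K J hJ) u p v = 0 := by
  refine (EMod.ι_map (intervalModule K J hJ) u h v).symm.trans
    (Eq.trans (congrArg _ ?_) (map_zero _))
  funext hq'
  exact (hq hq'.down).elim

-- Walk along the fence from `p` to `q`; box convexity keeps every step inside `J ∩ ZZbelow u`.
lemma EMod.ι_const_eq_of_isBoxConvex (hbox : IsBoxConvex (J ∩ ZZbelow u)) {p q : ZZbelow u}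
    (hp : p.1 ∈ J) (hq : q.1 ∈ J) (k : K) :
    EMod.ι (intervalModule K J hJ) u p (fun _ => k) =
      EMod.ι (intervalModule K J hJ) u q (fun _ => k) := by
  wlog hpq : p.1.i + p.1.j ≤ q.1.i + q.1.j generalizing p q
  · exact (this hq hp (by omega)).symm
  have hmem : ∀ n, p.1.i + p.1.j ≤ n → n ≤ q.1.i + q.1.j → ZZpt.ofInt n ∈ J ∩ ZZbelow u :=
    fun n => hbox.ofInt_mem ⟨hp, p.2⟩ ⟨hq, q.2⟩
  suffices h : ∀ n, p.1.i + p.1.j ≤ n → n ≤ q.1.i + q.1.j → ∀ r : ZZbelow u,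
      r.1 = ZZpt.ofInt n → EMod.ι (intervalModule K J hJ) u r (fun _ => k) =
        EMod.ι (intervalModule K J hJ) u p (fun _ => k) from
    (h _ hpq le_rfl q (ZZpt.ofInt_i_add_j q.1).symm).symm
  intro n hpn
  induction n, hpn using Int.leInduction with
  | base =>
    intro _ r hr
    rw [ZZpt.ofInt_i_add_j] at hr
    rw [Subtype.ext hr]
  | succ n hpn ih =>
    intro hnq r hr
    let r' : ZZbelow u := ⟨ZZpt.ofInt n, (hmem n hpn (by omega)).2⟩
    have hr'J : r'.1 ∈ J := (hmem n hpn (by omega)).1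
    have hrJ : r.1 ∈ J := hr ▸ (hmem (n + 1) (by omega) hnq).1
    rw [← ih (by omega) r' rfl]
    rcases ZZpt.ofInt_comparable_succ n with h | h
    · exact EMod.ι_const_eq_of_le hJ (p := r') (hr ▸ h) hr'J k
    · exact (EMod.ι_const_eq_of_le hJ (q := r') (hr ▸ h) hrJ k).symm

end IntervalModule

def extSupport (J : Set ZZpt) : Set UPos :=
  {u | (J ∩ ZZbelow u).Nonempty ∧ ∀ p ∈ J, ∀ q ∈ ZZbelow u, p ≤ q → q ∈ J}

lemma extSupport_convex (J : Set ZZpt) : IsConvexIn (extSupport J) := by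
  rintro u v w ⟨⟨p, hpJ, hpu⟩, -⟩ ⟨-, hw⟩ huv hvw
  exact ⟨⟨p, hpJ, ZZbelow_mono huv hpu⟩, fun p hp q hq => hw p hp q (ZZbelow_mono hvw hq)⟩

lemma mem_extSupport_of_le {J : Set ZZpt} {u w : UPos} (h : u ≤ w) (hw : w ∈ extSupport J)
    {p : ZZpt} (hp : p ∈ J ∩ ZZbelow u) : u ∈ extSupport J :=
  ⟨⟨p, hp⟩, fun p hp q hq => hw.2 p hp q (ZZbelow_mono h hq)⟩

section Comparison

variable {K : Type} [Field K] {J : Set ZZpt} (hJ : IsConvexIn J) {u : UPos}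

lemma EMod.ι_eq_zero_of_not_mem_extSupport (hbox : IsBoxConvex J) (hu : u ∉ extSupport J)
    (p : ZZbelow u) (v : (intervalModule K J hJ).V p.1) :
    EMod.ι (intervalModule K J hJ) u p v = 0 := by
  by_cases hp : p.1 ∈ J
  · have hup : ¬∀ p ∈ J, ∀ q ∈ ZZbelow u, p ≤ q → q ∈ J := fun h => hu ⟨⟨p, hp, p.2⟩, h⟩
    push Not at hup
    obtain ⟨p', hp', q, hq, hp'q, hqJ⟩ := hup
    change EMod.ι (intervalModule K J hJ) u p (fun _ => v ⟨hp⟩) = 0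
    rw [EMod.ι_const_eq_of_isBoxConvex hJ (hbox.inter (isBoxConvex_ZZbelow u))
      (q := ⟨p', isLowerSet_ZZbelow u hp'q hq⟩) hp hp']
    exact EMod.ι_eq_zero_of_le_of_not_mem hJ (q := ⟨q, hq⟩) hp'q hqJ _
  · rw [show v = 0 from funext fun h => (hp h.down).elim, map_zero]

variable (K) in
noncomputable def toExtSupport (u : UPos) :
    (EMod (intervalModule K J hJ)).V u →ₗ[K] (PLift (u ∈ extSupport J) → K) :=
  EMod.desc (fun p => pliftMap K (p.1 ∈ J) (u ∈ extSupport J)) fun p q h => by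
    ext v hu
    change pliftMap K _ _ ((intervalModule K J hJ).map h v) hu = _
    by_cases hp : p.1 ∈ J
    · have hq : q.1 ∈ J := hu.down.2 p hp q q.2 h
      exact (pliftMap_apply_of hq _ hu).trans
        ((intervalModule_map_apply_of hJ h hp v _).trans (pliftMap_apply_of hp v hu).symm)
    · refine Eq.trans ?_ (pliftMap_apply_of_not hp v hu).symm
      by_cases hq : q.1 ∈ J
      · exact (pliftMap_apply_of hq _ hu).trans (intervalModule_map_apply_of_not hJ h hp v _)
      · exact pliftMap_apply_of_not hq _ hu

lemma toExtSupport_ι (p : ZZbelow u) (v : (intervalModule K J hJ).V p.1) :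
    toExtSupport K hJ u (EMod.ι (intervalModule K J hJ) u p v) =
      pliftMap K (p.1 ∈ J) (u ∈ extSupport J) v :=
  EMod.desc_ι _ _ p v

variable (K) in
open Classical in
noncomputable def ofExtSupport (u : UPos) :
    (PLift (u ∈ extSupport J) → K) →ₗ[K] (EMod (intervalModule K J hJ)).V u :=
  if hu : u ∈ extSupport J then
    EMod.ι _ u ⟨hu.1.choose, hu.1.choose_spec.2⟩ ∘ₗ pliftMap K _ _
  else 0

lemma ofExtSupport_apply (hbox : IsBoxConvex J) (hu : u ∈ extSupport J) {p : ZZbelow u}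
    (hp : p.1 ∈ J) (v : PLift (u ∈ extSupport J) → K) :
    ofExtSupport K hJ u v = EMod.ι (intervalModule K J hJ) u p (fun _ => v ⟨hu⟩) := by
  have hc := hu.1.choose_spec
  rw [ofExtSupport, dif_pos hu]
  refine Eq.trans (congrArg (EMod.ι (intervalModule K J hJ) u _) (funext fun _ => ?_))
    (EMod.ι_const_eq_of_isBoxConvex hJ (hbox.inter (isBoxConvex_ZZbelow u)) hc.1 hp (v ⟨hu⟩))
  exact pliftMap_apply_of hu v _

lemma toExtSupport_comp_ofExtSupport (hbox : IsBoxConvex J) :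
    toExtSupport K hJ u ∘ₗ ofExtSupport K hJ u = LinearMap.id := by
  refine LinearMap.ext fun v => funext fun hu => ?_
  obtain ⟨p, hpJ, hpu⟩ := hu.down.1
  rw [LinearMap.comp_apply, ofExtSupport_apply hJ hbox hu.down (p := ⟨p, hpu⟩) hpJ]
  exact (congrFun (toExtSupport_ι hJ _ _) hu).trans (pliftMap_apply_of hpJ _ hu)

lemma ofExtSupport_comp_toExtSupport (hbox : IsBoxConvex J) :
    ofExtSupport K hJ u ∘ₗ toExtSupport K hJ u = LinearMap.id := by
  refine EMod.hom_ext fun p => LinearMap.ext fun v => ?_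
  change ofExtSupport K hJ u (toExtSupport K hJ u (EMod.ι _ u p v)) = EMod.ι _ u p v
  by_cases hp : p.1 ∈ J
  · rw [toExtSupport_ι]
    by_cases hu : u ∈ extSupport J
    · rw [ofExtSupport_apply hJ hbox hu hp]
      exact congrArg _ (funext fun _ => pliftMap_apply_of hp v _)
    · rw [ofExtSupport, dif_neg hu, LinearMap.zero_apply,
        EMod.ι_eq_zero_of_not_mem_extSupport hJ hbox hu]
  · rw [show v = 0 from funext fun h => (hp h.down).elim, map_zero, map_zero, map_zero]

lemma toExtSupport_comp_map {u w : UPos} (h : u ≤ w) :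
    toExtSupport K hJ w ∘ₗ (EMod (intervalModule K J hJ)).map h =
      (intervalModule K (extSupport J) (extSupport_convex J)).map h ∘ₗ toExtSupport K hJ u := by
  refine EMod.hom_ext fun p => LinearMap.ext fun v => funext fun hw => ?_
  change toExtSupport K hJ w ((EMod _).map h (EMod.ι _ u p v)) hw =
    (intervalModule K _ (extSupport_convex J)).map h (toExtSupport K hJ u (EMod.ι _ u p v)) hw
  rw [EMod.map_ι, toExtSupport_ι, toExtSupport_ι]
  by_cases hp : p.1 ∈ J
  · have hu := mem_extSupport_of_le h hw.down ⟨hp, p.2⟩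
    exact (pliftMap_apply_of hp v hw).trans ((intervalModule_map_apply_of _ h hu _ hw).trans
      (pliftMap_apply_of hp v ⟨hu⟩)).symm
  · refine (pliftMap_apply_of_not hp v hw).trans ?_
    by_cases hu : u ∈ extSupport J
    · exact ((intervalModule_map_apply_of _ h hu _ hw).trans (pliftMap_apply_of_not hp v _)).symm
    · exact (intervalModule_map_apply_of_not _ h hu _ hw).symm

noncomputable def emodIntervalModuleIso (hbox : IsBoxConvex J) :
    PersIso (EMod (intervalModule K J hJ))
      (intervalModule K (extSupport J) (extSupport_convex J)) where
  e u := LinearEquiv.ofLinearMap (toExtSupport K hJ u) (ofExtSupport K hJ u)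
    (toExtSupport_comp_ofExtSupport hJ hbox) (ofExtSupport_comp_toExtSupport hJ hbox)
  natural h := LinearMap.congr_fun (toExtSupport_comp_map hJ h)

lemma nonempty_persIso_of_extSupport_eq (hbox : IsBoxConvex J) {B : Set UPos}
    (hB : IsConvexIn B) (h : extSupport J = B) :
    Nonempty (PersIso (EMod (intervalModule K J hJ)) (intervalModule K B hB)) := by
  subst h
  exact ⟨emodIntervalModuleIso hJ hbox⟩

end Comparison

/-- A zigzag interval is `L ∩ H`, where `L` encodes its lower endpoint and `H` its upper one;
`BL` and `BH` are the matching conditions cutting out the block. `escape` says that off `BL` the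
upward closedness required in `extSupport` already fails inside `L`, at a point `p'` that is
coordinatewise below `p` and hence still lies in `H` (symmetrically for `UpperEnd`). -/
structure LowerEnd (L : Set ZZpt) (BL : Set UPos) : Prop where
  coord_mono : ∀ ⦃p q : ZZpt⦄, p.i ≤ q.i → p.j ≤ q.j → p ∈ L → q ∈ L
  mem_of_le : ∀ u ∈ BL, ∀ p ∈ L, ∀ q ∈ ZZbelow u, p ≤ q → q ∈ L
  escape : ∀ u ∉ BL, ∀ p ∈ L ∩ ZZbelow u, ∃ p' q : ZZpt, p'.i ≤ p.i ∧ p'.j ≤ p.j ∧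
    p' ∈ L ∩ ZZbelow u ∧ q ∈ ZZbelow u ∧ p' ≤ q ∧ q ∉ L

structure UpperEnd (H : Set ZZpt) (BH : Set UPos) : Prop where
  coord_anti : ∀ ⦃p q : ZZpt⦄, p.i ≤ q.i → p.j ≤ q.j → q ∈ H → p ∈ H
  mem_of_le : ∀ u ∈ BH, ∀ p ∈ H, ∀ q ∈ ZZbelow u, p ≤ q → q ∈ H
  escape : ∀ u ∉ BH, ∀ p ∈ H ∩ ZZbelow u, ∃ p' q : ZZpt, p.i ≤ p'.i ∧ p.j ≤ p'.j ∧
    p' ∈ H ∩ ZZbelow u ∧ q ∈ ZZbelow u ∧ p' ≤ q ∧ q ∉ H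

section Ends

variable {L H : Set ZZpt} {BL BH : Set UPos}

lemma LowerEnd.isBoxConvex_inter (hL : LowerEnd L BL) (hH : UpperEnd H BH) :
    IsBoxConvex (L ∩ H) := fun _ _ _ hp hq h₁ h₂ h₃ h₄ =>
  ⟨hL.coord_mono h₁ h₃ hp.1, hH.coord_anti h₂ h₄ hq.2⟩

lemma LowerEnd.extSupport_inter_eq (hL : LowerEnd L BL) (hH : UpperEnd H BH)
    (hne : ∀ u ∈ BL ∩ BH, (L ∩ H ∩ ZZbelow u).Nonempty) : extSupport (L ∩ H) = BL ∩ BH := by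
  ext u
  refine ⟨fun ⟨⟨p, ⟨hpL, hpH⟩, hpu⟩, hup⟩ => ⟨?_, ?_⟩, fun hu => ⟨hne u hu, ?_⟩⟩
  · by_contra hu
    obtain ⟨p', q, hi, hj, ⟨hp'L, hp'u⟩, hqu, hp'q, hqL⟩ := hL.escape u hu p ⟨hpL, hpu⟩
    exact hqL (hup p' ⟨hp'L, hH.coord_anti hi hj hpH⟩ q hqu hp'q).1
  · by_contra hu
    obtain ⟨p', q, hi, hj, ⟨hp'H, hp'u⟩, hqu, hp'q, hqH⟩ := hH.escape u hu p ⟨hpH, hpu⟩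
    exact hqH (hup p' ⟨hL.coord_mono hi hj hpL, hp'H⟩ q hqu hp'q).2
  · exact fun p hp q hq hpq =>
      ⟨hL.mem_of_le u hu.1 p hp.1 q hq hpq, hH.mem_of_le u hu.2 p hp.2 q hq hpq⟩

lemma LowerEnd.nonempty_persIso {K : Type} [Field K] (hL : LowerEnd L BL) (hH : UpperEnd H BH)
    (hne : ∀ u ∈ BL ∩ BH, (L ∩ H ∩ ZZbelow u).Nonempty) (hJ : IsConvexIn (L ∩ H)) {B : Set UPos}
    (hB : IsConvexIn B) (hBLH : BL ∩ BH = B) :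
    Nonempty (PersIso (EMod (intervalModule K (L ∩ H) hJ)) (intervalModule K B hB)) :=
  nonempty_persIso_of_extSupport_eq hJ (hL.isBoxConvex_inter hH) hB
    ((hL.extSupport_inter_eq hH hne).trans hBLH)

end Ends

lemma mem_ZZbelow_iff {u : UPos} {p : ZZpt} :
    p ∈ ZZbelow u ↔ ⌈u.1.x⌉ ≤ p.i ∧ p.j ≤ ⌊u.1.y⌋ := by
  rw [Int.ceil_le, Int.le_floor]
  rfl

lemma UPos.ceil_x_le_floor_y_add_one (u : UPos) : ⌈u.1.x⌉ ≤ ⌊u.1.y⌋ + 1 :=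
  (Int.ceil_le_floor_add_one _).trans (by grw [Int.floor_mono u.2])

lemma zzLtLo_intCast_iff (b : ℤ) (p : ZZpt) : zzLtLo ((b : ℝ) : EReal) p ↔ b ≤ p.j ∧ b < p.i := by
  simp only [zzLtLo_iff, pI, pJ, EReal.coe_le_coe_iff, EReal.coe_lt_coe_iff, Int.cast_le,
    Int.cast_lt]

lemma zzLeLo_intCast_iff (b : ℤ) (p : ZZpt) : zzLeLo ((b : ℝ) : EReal) p ↔ b ≤ p.j := by
  simp only [zzLeLo_iff, pJ, EReal.coe_le_coe_iff, Int.cast_le]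

lemma zzLtHi_intCast_iff (p : ZZpt) (d : ℤ) : zzLtHi p ((d : ℝ) : EReal) ↔ p.i ≤ d ∧ p.j < d := by
  simp only [zzLtHi_iff, pI, pJ, EReal.coe_le_coe_iff, EReal.coe_lt_coe_iff, Int.cast_le,
    Int.cast_lt]

lemma zzLeHi_intCast_iff (p : ZZpt) (d : ℤ) : zzLeHi p ((d : ℝ) : EReal) ↔ p.i ≤ d := by
  simp only [zzLeHi_iff, pI, EReal.coe_le_coe_iff, Int.cast_le]

lemma intCast_lt_coe_iff (b : ℤ) (x : ℝ) : ((b : ℝ) : EReal) < x ↔ b < ⌈x⌉ :=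
  EReal.coe_lt_coe_iff.trans Int.lt_ceil.symm

lemma intCast_le_coe_iff (b : ℤ) (y : ℝ) : ((b : ℝ) : EReal) ≤ y ↔ b ≤ ⌊y⌋ :=
  EReal.coe_le_coe_iff.trans Int.le_floor.symm

lemma coe_lt_intCast_iff (y : ℝ) (d : ℤ) : (y : EReal) < ((d : ℝ) : EReal) ↔ ⌊y⌋ < d :=
  EReal.coe_lt_coe_iff.trans Int.floor_lt.symm

lemma coe_le_intCast_iff (x : ℝ) (d : ℤ) : (x : EReal) ≤ ((d : ℝ) : EReal) ↔ ⌈x⌉ ≤ d :=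
  EReal.coe_le_coe_iff.trans Int.ceil_le.symm

lemma ZZbelow_subset_zzLtLo_intCast {b : ℤ} {u : UPos} (hu : ((b : ℝ) : EReal) < u.1.x) :
    ZZbelow u ⊆ {p | zzLtLo ((b : ℝ) : EReal) p} := fun p hp => by
  have := p.hij
  simp only [Set.mem_ofPred_eq, zzLtLo_intCast_iff, intCast_lt_coe_iff, mem_ZZbelow_iff] at *
  omega

lemma lowerEnd_zzLtLo_intCast (b : ℤ) :
    LowerEnd {p | zzLtLo ((b : ℝ) : EReal) p} {u | ((b : ℝ) : EReal) < u.1.x} where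
  coord_mono p q := by
    simp only [Set.mem_ofPred_eq, zzLtLo_intCast_iff]
    omega
  mem_of_le u hu _ _ q hq _ := ZZbelow_subset_zzLtLo_intCast hu hq
  escape u hu p hp := by
    refine ⟨⟨b + 1, b, by omega⟩, ⟨b, b, by omega⟩, ?_⟩
    simp only [Set.mem_ofPred_eq, Set.mem_inter_iff, zzLtLo_intCast_iff, intCast_lt_coe_iff,
      mem_ZZbelow_iff, ZZpt.le_def] at *
    omega

lemma lowerEnd_zzLeLo (b : ℤ) :
    LowerEnd {p | zzLeLo ((b : ℝ) : EReal) p} {u | ((b : ℝ) : EReal) ≤ u.1.y} where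
  coord_mono p q := by
    simp only [Set.mem_ofPred_eq, zzLeLo_intCast_iff]
    omega
  mem_of_le u _ p hp q _ hpq := by
    simp only [Set.mem_ofPred_eq, zzLeLo_intCast_iff, ZZpt.le_def] at *
    omega
  escape u hu p hp := by
    simp only [Set.mem_ofPred_eq, Set.mem_inter_iff, zzLeLo_intCast_iff, intCast_le_coe_iff,
      mem_ZZbelow_iff] at hu hp
    omega

lemma ZZbelow_subset_zzLtHi_intCast {d : ℤ} {u : UPos} (hu : (u.1.y : EReal) < ((d : ℝ) : EReal)) :
    ZZbelow u ⊆ {p | zzLtHi p ((d : ℝ) : EReal)} := fun p hp => by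
  have := p.hij
  simp only [Set.mem_ofPred_eq, zzLtHi_intCast_iff, coe_lt_intCast_iff, mem_ZZbelow_iff] at *
  omega

lemma upperEnd_zzLtHi_intCast (d : ℤ) :
    UpperEnd {p | zzLtHi p ((d : ℝ) : EReal)} {u | (u.1.y : EReal) < ((d : ℝ) : EReal)} where
  coord_anti p q := by
    simp only [Set.mem_ofPred_eq, zzLtHi_intCast_iff]
    omega
  mem_of_le u hu _ _ q hq _ := ZZbelow_subset_zzLtHi_intCast hu hq
  escape u hu p hp := by
    refine ⟨⟨d, d - 1, by omega⟩, ⟨d, d, by omega⟩, ?_⟩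
    simp only [Set.mem_ofPred_eq, Set.mem_inter_iff, zzLtHi_intCast_iff, coe_lt_intCast_iff,
      mem_ZZbelow_iff, ZZpt.le_def] at *
    omega

lemma upperEnd_zzLeHi (d : ℤ) :
    UpperEnd {p | zzLeHi p ((d : ℝ) : EReal)} {u | (u.1.x : EReal) ≤ ((d : ℝ) : EReal)} where
  coord_anti p q := by
    simp only [Set.mem_ofPred_eq, zzLeHi_intCast_iff]
    omega
  mem_of_le u _ p hp q _ hpq := by
    simp only [Set.mem_ofPred_eq, zzLeHi_intCast_iff, ZZpt.le_def] at *
    omega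
  escape u hu p hp := by
    simp only [Set.mem_ofPred_eq, Set.mem_inter_iff, zzLeHi_intCast_iff, coe_le_intCast_iff,
      mem_ZZbelow_iff] at hu hp
    omega

lemma ZZbelow_subset_zzLtLo (β : WithBot (WithTop ℤ)) {u : UPos} (hu : ez β < u.1.x) :
    ZZbelow u ⊆ {p | zzLtLo (ez β) p} := by
  rcases β with _ | _ | b
  · exact fun p _ => (zzLtLo_iff _ _).2 ⟨bot_le, EReal.bot_lt_coe _⟩
  · exact (not_top_lt hu).elim
  · exact ZZbelow_subset_zzLtLo_intCast hu

lemma ZZbelow_subset_zzLtHi (δ : WithBot (WithTop ℤ)) {u : UPos} (hu : (u.1.y : EReal) < ez δ) :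
    ZZbelow u ⊆ {p | zzLtHi p (ez δ)} := by
  rcases δ with _ | _ | d
  · exact (not_lt_bot hu).elim
  · exact fun p _ => (zzLtHi_iff _ _).2 ⟨le_top, EReal.coe_lt_top _⟩
  · exact ZZbelow_subset_zzLtHi_intCast hu

lemma lowerEnd_zzLtLo (β : WithBot (WithTop ℤ)) :
    LowerEnd {p | zzLtLo (ez β) p} {u | ez β < u.1.x} := by
  rcases β with _ | _ | b
  · have hL (p : ZZpt) : zzLtLo (ez none) p := (zzLtLo_iff _ _).2 ⟨bot_le, EReal.bot_lt_coe _⟩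
    exact ⟨fun _ q _ _ _ => hL q, fun _ _ _ _ q _ _ => hL q,
      fun _ hu => (hu (EReal.bot_lt_coe _)).elim⟩
  · have hL (p : ZZpt) : ¬zzLtLo (ez (some none)) p := fun h => not_top_lt ((zzLtLo_iff _ _).1 h).2
    exact ⟨fun p _ _ _ hp => (hL p hp).elim, fun _ _ p hp => (hL p hp).elim,
      fun _ _ p hp => (hL p hp.1).elim⟩
  · exact lowerEnd_zzLtLo_intCast b

lemma upperEnd_zzLtHi (δ : WithBot (WithTop ℤ)) :
    UpperEnd {p | zzLtHi p (ez δ)} {u | (u.1.y : EReal) < ez δ} := by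
  rcases δ with _ | _ | d
  · have hH (p : ZZpt) : ¬zzLtHi p (ez none) := fun h => not_lt_bot ((zzLtHi_iff _ _).1 h).2
    exact ⟨fun _ q _ _ hq => (hH q hq).elim, fun _ _ p hp => (hH p hp).elim,
      fun _ _ p hp => (hH p hp.1).elim⟩
  · have hH (p : ZZpt) : zzLtHi p (ez (some none)) :=
      (zzLtHi_iff _ _).2 ⟨le_top, EReal.coe_lt_top _⟩
    exact ⟨fun p _ _ _ _ => hH p, fun _ _ _ _ q _ _ => hH q,
      fun _ hu => (hu (EReal.coe_lt_top _)).elim⟩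
  · exact upperEnd_zzLtHi_intCast d

lemma mk_ceil_mem_ZZbelow (u : UPos) :
    (⟨⌈u.1.x⌉, ⌈u.1.x⌉ - 1, Or.inr rfl⟩ : ZZpt) ∈ ZZbelow u :=
  mem_ZZbelow_iff.2 ⟨le_rfl, by linarith [u.ceil_x_le_floor_y_add_one]⟩

lemma mk_floor_mem_ZZbelow (u : UPos) :
    (⟨⌊u.1.y⌋ + 1, ⌊u.1.y⌋, Or.inr (by ring)⟩ : ZZpt) ∈ ZZbelow u :=
  mem_ZZbelow_iff.2 ⟨u.ceil_x_le_floor_y_add_one, le_rfl⟩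

lemma zzO_inter_ZZbelow_nonempty (β δ : WithBot (WithTop ℤ)) {u : UPos}
    (hu : u ∈ ublkO (ez β) (ez δ)) : (zzO (ez β) (ez δ) ∩ ZZbelow u).Nonempty :=
  ⟨_, ⟨ZZbelow_subset_zzLtLo β hu.1 (mk_ceil_mem_ZZbelow u),
    ZZbelow_subset_zzLtHi δ hu.2 (mk_ceil_mem_ZZbelow u)⟩, mk_ceil_mem_ZZbelow u⟩

lemma zzCO_inter_ZZbelow_nonempty (b : ℤ) (δ : WithBot (WithTop ℤ)) {u : UPos}
    (hu : u ∈ ublkCO ((b : ℝ) : EReal) (ez δ)) :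
    (zzCO ((b : ℝ) : EReal) (ez δ) ∩ ZZbelow u).Nonempty := by
  refine ⟨_, ⟨?_, ZZbelow_subset_zzLtHi δ hu.2 (mk_floor_mem_ZZbelow u)⟩,
    mk_floor_mem_ZZbelow u⟩
  rw [zzLeLo_intCast_iff]
  exact (intCast_le_coe_iff b _).1 hu.1

lemma zzOC_inter_ZZbelow_nonempty (β : WithBot (WithTop ℤ)) (d : ℤ) {u : UPos}
    (hu : u ∈ ublkOC (ez β) ((d : ℝ) : EReal)) :
    (zzOC (ez β) ((d : ℝ) : EReal) ∩ ZZbelow u).Nonempty := by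
  refine ⟨_, ⟨ZZbelow_subset_zzLtLo β hu.1 (mk_ceil_mem_ZZbelow u), ?_⟩,
    mk_ceil_mem_ZZbelow u⟩
  rw [zzLeHi_intCast_iff]
  exact (coe_le_intCast_iff _ d).1 hu.2

lemma zzCC_inter_ZZbelow_nonempty {b d : ℤ} (hbd : b ≤ d) {u : UPos}
    (hu : u ∈ ublkCC ((b : ℝ) : EReal) ((d : ℝ) : EReal)) :
    (zzCC ((b : ℝ) : EReal) ((d : ℝ) : EReal) ∩ ZZbelow u).Nonempty := by
  have hx := (coe_le_intCast_iff _ d).1 hu.1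
  have hy := (intCast_le_coe_iff b _).1 hu.2
  have := u.ceil_x_le_floor_y_add_one
  refine ⟨⟨max ⌈u.1.x⌉ b, max (⌈u.1.x⌉ - 1) b, by omega⟩, ?_⟩
  simp only [Set.mem_inter_iff, zzCC, Set.mem_ofPred_eq, zzLeLo_intCast_iff, zzLeHi_intCast_iff,
    mem_ZZbelow_iff]
  omega

/-- The block extension functor `E` sends zigzag interval modules to block
interval modules, matching open/closed endpoint types:
`E(I^{(b,d)_ZZ}) ≅ I^{(b,d)_BL}`, `E(I^{[b,d)_ZZ}) ≅ I^{[b,d)_BL}`,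
`E(I^{(b,d]_ZZ}) ≅ I^{(b,d]_BL}` and `E(I^{[b,d]_ZZ}) ≅ I^{[b,d]_BL}`. -/
theorem block_extension_of_interval_modules (K : Type) [Field K] :
    (∀ β δ : WithBot (WithTop ℤ), ez β < ez δ →
      Nonempty (PersIso
        (EMod (intervalModule K (zzO (ez β) (ez δ)) (zzO_convex _ _)))
        (intervalModule K (ublkO (ez β) (ez δ)) (ublkO_convex _ _)))) ∧
    (∀ (b : ℤ) (δ : WithBot (WithTop ℤ)), ((b : ℝ) : EReal) < ez δ →
      Nonempty (PersIso
        (EMod (intervalModule K (zzCO ((b : ℝ) : EReal) (ez δ)) (zzCO_convex _ _)))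
        (intervalModule K (ublkCO ((b : ℝ) : EReal) (ez δ)) (ublkCO_convex _ _)))) ∧
    (∀ (β : WithBot (WithTop ℤ)) (d : ℤ), ez β < ((d : ℝ) : EReal) →
      Nonempty (PersIso
        (EMod (intervalModule K (zzOC (ez β) ((d : ℝ) : EReal)) (zzOC_convex _ _)))
        (intervalModule K (ublkOC (ez β) ((d : ℝ) : EReal)) (ublkOC_convex _ _)))) ∧
    (∀ b d : ℤ, b ≤ d →
      Nonempty (PersIso
        (EMod (intervalModule K (zzCC ((b : ℝ) : EReal) ((d : ℝ) : EReal)) (zzCC_convex _ _)))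
        (intervalModule K (ublkCC ((b : ℝ) : EReal) ((d : ℝ) : EReal)) (ublkCC_convex _ _)))) :=
  ⟨fun β δ _ => (lowerEnd_zzLtLo β).nonempty_persIso (upperEnd_zzLtHi δ)
      (fun _ => zzO_inter_ZZbelow_nonempty β δ) _ _ rfl,
    fun b δ _ => (lowerEnd_zzLeLo b).nonempty_persIso (upperEnd_zzLtHi δ)
      (fun _ => zzCO_inter_ZZbelow_nonempty b δ) _ _ rfl,
    fun β d _ => (lowerEnd_zzLtLo β).nonempty_persIso (upperEnd_zzLeHi d)
      (fun _ => zzOC_inter_ZZbelow_nonempty β d) _ _ rfl,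
    fun b d hbd => (lowerEnd_zzLeLo b).nonempty_persIso (upperEnd_zzLeHi d)
      (fun _ hu => zzCC_inter_ZZbelow_nonempty hbd ⟨hu.2, hu.1⟩) _ _ (Set.inter_comm _ _)⟩

end PersStab
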